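/- For a finite MDP with target set B̂ ⊆ Ŝ, every n-step policy is sandwiched by value iteration: for every n-step policy ρ (a list of n decision rules) and every ŝ ∈ Ŝ, minreach n ŝ ≤ val ρ ŝ ≤ maxreach n ŝ. -/

import Mathlib

open scoped Classical

/-- Minimum value-iteration sequence for reaching target set `B` in a finite MDP. -/
noncomputable def minreach {S A : Type*} [Fintype S]
    (Act : S → Finset A) (hAct : ∀ s, (Act s).Nonempty)
    (P : S → A → S → ℝ) (B : Set S) : ℕ → S → ℝ
  | 0, s => if s ∈ B then 1 else 0
  | n + 1, s =>
      if s ∈ B then 1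
      else (Act s).inf' (hAct s) fun α => ∑ s' : S, P s α s' * minreach Act hAct P B n s'

/-- Maximum value-iteration sequence for reaching target set `B` in a finite MDP. -/
noncomputable def maxreach {S A : Type*} [Fintype S]
    (Act : S → Finset A) (hAct : ∀ s, (Act s).Nonempty)
    (P : S → A → S → ℝ) (B : Set S) : ℕ → S → ℝ
  | 0, s => if s ∈ B then 1 else 0
  | n + 1, s =>
      if s ∈ B then 1
      else (Act s).sup' (hAct s) fun α => ∑ s' : S, P s α s' * maxreach Act hAct P B n s'

/-- Value of an n-step policy (a list of decision rules): `val [] ŝ` is the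
indicator of the target, and `val (σ :: ρ) ŝ = 1` if `ŝ ∈ B̂` else
`∑ ŝ', P̂ ŝ (σ ŝ) ŝ' * val ρ ŝ'`. -/
noncomputable def polVal {S A : Type*} [Fintype S]
    (P : S → A → S → ℝ) (B : Set S) : List (S → A) → S → ℝ
  | [], s => if s ∈ B then 1 else 0
  | σ :: ρ, s => if s ∈ B then 1 else ∑ s' : S, P s (σ s) s' * polVal P B ρ s'

/-- For a finite MDP with target set B̂ ⊆ Ŝ, every n-step policy is
sandwiched by value iteration: for every n-step policy ρ and every state ŝ,
`minreach n ŝ ≤ val ρ ŝ ≤ maxreach n ŝ` (where n is the length of ρ). -/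
theorem policy_sandwiched_by_valueIteration {S A : Type*}
    [Fintype S] [Nonempty S] [Fintype A]
    (Act : S → Finset A) (hAct : ∀ s, (Act s).Nonempty)
    (P : S → A → S → ℝ)
    (hP : ∀ (s : S) (α : A) (s' : S), 0 ≤ P s α s')
    (hsum : ∀ s : S, ∀ α ∈ Act s, ∑ s' : S, P s α s' = 1)
    (B : Set S) :
    ∀ ρ : List (S → A), (∀ σ ∈ ρ, ∀ s : S, σ s ∈ Act s) →
      ∀ s : S,
        minreach Act hAct P B ρ.length s ≤ polVal P B ρ s ∧
        polVal P B ρ s ≤ maxreach Act hAct P B ρ.length s := by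
  intro ρ
  induction ρ with
  | nil =>
    intro _ s
    simp [minreach, maxreach, polVal]
  | cons σ ρ ih =>
    intro h s
    have hσ : σ s ∈ Act s := h σ List.mem_cons_self s
    have ih' := ih (fun τ hτ => h τ (List.mem_cons_of_mem _ hτ))
    constructor
    · simp only [List.length_cons, minreach, polVal]
      split
      · exact le_rfl
      · refine le_trans (Finset.inf'_le _ hσ) ?_
        exact Finset.sum_le_sum fun s' _ =>
          mul_le_mul_of_nonneg_left (ih' s').1 (hP s (σ s) s')
    · simp only [List.length_cons, maxreach, polVal]
      split
      · exact le_rfl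
      · refine le_trans ?_ (Finset.le_sup' _ hσ)
        exact Finset.sum_le_sum fun s' _ =>
          mul_le_mul_of_nonneg_left (ih' s').2 (hP s (σ s) s')
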